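/- Let f : ℝ → ℝ be continuously differentiable and let ρ, r̄ ∈ ℝ. Then the limit as ε → 0⁺ of ∫_ℝ f′(v)·((v − r̄)/√((v − r̄)² + ε²))·χ_ρ(v) dv equals sgn(ρ − r̄)·(f(ρ) − f(r̄)) − sgn(r̄)·(f(r̄) − f(0)). -/

import Mathlib

open MeasureTheory Filter Set

/-- The Maxwellian (kinetic) function `χ_ρ`. -/
noncomputable def chi (a : ℝ) (v : ℝ) : ℝ :=
  if 0 < v ∧ v < a then 1 else if a < v ∧ v < 0 then -1 else 0

open Topology

/-!
Multiplying by `χ_ρ` turns the integral over `ℝ` into `∫ v in 0..ρ`. On this bounded interval the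
regularised sign `(v - r̄) / √((v - r̄)² + ε²)` is bounded by `1` and tends to `sgn (v - r̄)`, so by
dominated convergence the integrals tend to `∫ v in 0..ρ, f′ v * sgn (v - r̄)`. That integral is
evaluated by the fundamental theorem of calculus: `v ↦ sgn (v - r̄) * (f v - f r̄)` is continuous
and is an antiderivative of `f′ * sgn (· - r̄)` away from `r̄`.
-/

lemma mul_chi_of_nonneg (g : ℝ → ℝ) {ρ : ℝ} (hρ : 0 ≤ ρ) :
    (fun v => g v * chi ρ v) = (Ioo 0 ρ).indicator g := by
  ext v
  simp only [chi, indicator, mem_Ioo]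
  split_ifs <;> grind

lemma mul_chi_of_neg (g : ℝ → ℝ) {ρ : ℝ} (hρ : ρ < 0) :
    (fun v => g v * chi ρ v) = -(Ioo ρ 0).indicator g := by
  ext v
  simp only [chi, indicator, mem_Ioo, Pi.neg_apply]
  split_ifs <;> grind

lemma integral_mul_chi (g : ℝ → ℝ) (ρ : ℝ) :
    ∫ v, g v * chi ρ v = ∫ v in 0..ρ, g v := by
  rcases le_or_gt 0 ρ with hρ | hρ
  · rw [mul_chi_of_nonneg g hρ, integral_indicator measurableSet_Ioo,
      ← integral_Ioc_eq_integral_Ioo, intervalIntegral.integral_of_le hρ]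
  · rw [mul_chi_of_neg g hρ, Pi.neg_def, integral_neg, integral_indicator measurableSet_Ioo,
      ← integral_Ioc_eq_integral_Ioo, intervalIntegral.integral_of_ge hρ.le]

lemma Real.measurable_sign : Measurable Real.sign :=
  Measurable.ite measurableSet_Iio measurable_const
    (Measurable.ite measurableSet_Ioi measurable_const measurable_const)

lemma Real.abs_sign_le_one (x : ℝ) : |Real.sign x| ≤ 1 := by
  rcases Real.sign_apply_eq x with h | h | h <;> simp [h]

lemma eventually_sign_sub_eq {x c : ℝ} (hx : x ≠ c) :
    ∀ᶠ v in 𝓝 x, Real.sign (v - c) = Real.sign (x - c) := by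
  rcases hx.lt_or_gt with hx | hx
  · filter_upwards [Iio_mem_nhds hx] with v hv
    rw [Real.sign_of_neg (sub_neg.2 hv), Real.sign_of_neg (sub_neg.2 hx)]
  · filter_upwards [Ioi_mem_nhds hx] with v hv
    rw [Real.sign_of_pos (sub_pos.2 hv), Real.sign_of_pos (sub_pos.2 hx)]

lemma IntervalIntegrable.mul_sign_sub {g : ℝ → ℝ} {a b : ℝ} (hg : IntervalIntegrable g volume a b)
    (c : ℝ) : IntervalIntegrable (fun v => g v * Real.sign (v - c)) volume a b := by
  rw [intervalIntegrable_iff] at hg ⊢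
  refine hg.mul_bdd (c := 1) ?_ (ae_of_all _ fun v => Real.abs_sign_le_one _)
  exact (Real.measurable_sign.comp (measurable_sub_const c)).aestronglyMeasurable

lemma continuous_sign_sub_mul_sub {f : ℝ → ℝ} (hf : Continuous f) (c : ℝ) :
    Continuous fun v => Real.sign (v - c) * (f v - f c) := by
  refine continuous_iff_continuousAt.2 fun x => ?_
  rcases eq_or_ne x c with rfl | hx
  · have hbdd : IsBoundedUnder (· ≤ ·) (𝓝 x) (norm ∘ fun v => Real.sign (v - x)) :=
      isBoundedUnder_of ⟨1, fun v => Real.abs_sign_le_one _⟩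
    have hzero : Tendsto (fun v => f v - f x) (𝓝 x) (𝓝 0) := by
      simpa using (hf.tendsto x).sub_const (f x)
    simpa [ContinuousAt] using isBoundedUnder_le_mul_tendsto_zero hbdd hzero
  · refine ContinuousAt.congr (f := fun v => Real.sign (x - c) * (f v - f c)) (by fun_prop) ?_
    filter_upwards [eventually_sign_sub_eq hx] with v hv
    rw [hv]

lemma hasDerivAt_sign_sub_mul_sub {f : ℝ → ℝ} {x c : ℝ} (hf : DifferentiableAt ℝ f x)
    (hx : x ≠ c) :
    HasDerivAt (fun v => Real.sign (v - c) * (f v - f c)) (deriv f x * Real.sign (x - c)) x := by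
  rw [mul_comm]
  refine ((hf.hasDerivAt.sub_const (f c)).const_mul _).congr_of_eventuallyEq ?_
  filter_upwards [eventually_sign_sub_eq hx] with v hv
  rw [hv]

lemma integral_deriv_mul_sign_sub {f : ℝ → ℝ} (hf : Differentiable ℝ f) {a b : ℝ}
    (hf' : IntervalIntegrable (deriv f) volume a b) (c : ℝ) :
    ∫ v in a..b, deriv f v * Real.sign (v - c) =
      Real.sign (b - c) * (f b - f c) - Real.sign (a - c) * (f a - f c) :=
  integral_eq_of_hasDerivAt_off_countable _ _ (countable_singleton c)
    (continuous_sign_sub_mul_sub hf.continuous c).continuousOn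
    (fun x hx => hasDerivAt_sign_sub_mul_sub (hf x) hx.2) (hf'.mul_sign_sub c)

lemma abs_div_sqrt_sq_add_sq_le_one (x ε : ℝ) : |x / √(x ^ 2 + ε ^ 2)| ≤ 1 := by
  rw [abs_div, abs_of_nonneg (Real.sqrt_nonneg _)]
  refine div_le_one_of_le₀ ?_ (Real.sqrt_nonneg _)
  rw [← Real.sqrt_sq_eq_abs]
  exact Real.sqrt_le_sqrt (by nlinarith)

lemma tendsto_div_sqrt_sq_add_sq (x : ℝ) :
    Tendsto (fun ε => x / √(x ^ 2 + ε ^ 2)) (𝓝 0) (𝓝 (Real.sign x)) := by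
  rcases eq_or_ne x 0 with rfl | hx
  · simp
  have hsign : x / √(x ^ 2 + 0 ^ 2) = Real.sign x := by
    rw [zero_pow two_ne_zero, add_zero, Real.sqrt_sq_eq_abs]
    rcases hx.lt_or_gt with h | h
    · rw [abs_of_neg h, Real.sign_of_neg h, div_neg, div_self hx]
    · rw [abs_of_pos h, Real.sign_of_pos h, div_self hx]
  rw [← hsign]
  refine (continuous_const.div (by fun_prop) fun ε => ?_).tendsto 0
  exact (Real.sqrt_pos.2 (by positivity)).ne'

lemma tendsto_intervalIntegral_mul_div_sqrt {g : ℝ → ℝ} (hg : Continuous g) (a b c : ℝ) :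
    Tendsto (fun ε => ∫ v in a..b, g v * ((v - c) / √((v - c) ^ 2 + ε ^ 2))) (𝓝 0)
      (𝓝 (∫ v in a..b, g v * Real.sign (v - c))) := by
  refine intervalIntegral.tendsto_integral_filter_of_dominated_convergence (fun v => ‖g v‖)
    (Eventually.of_forall fun ε => ?_) (Eventually.of_forall fun ε => ?_)
    (hg.intervalIntegrable a b).norm
    (ae_of_all _ fun v _ => (tendsto_div_sqrt_sq_add_sq (v - c)).const_mul (g v))
  · exact (hg.measurable.mul (by fun_prop)).aestronglyMeasurable
  · refine ae_of_all _ fun v _ => ?_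
    rw [norm_mul]
    exact mul_le_of_le_one_right (norm_nonneg _) (abs_div_sqrt_sq_add_sq_le_one _ _)

/-- Let `f` be continuously differentiable and `ρ, r̄ ∈ ℝ`. Then, as `ε → 0⁺`,
`∫ f′(v) ((v − r̄)/√((v − r̄)² + ε²)) χ_ρ(v) dv` tends to
`sgn(ρ − r̄)(f ρ − f r̄) − sgn(r̄)(f r̄ − f 0)`. -/
theorem tendsto_Q_eps (f : ℝ → ℝ) (hf : ContDiff ℝ 1 f) (ρ rbar : ℝ) :
    Tendsto
      (fun ε : ℝ =>
        ∫ v : ℝ, deriv f v * ((v - rbar) / Real.sqrt ((v - rbar) ^ 2 + ε ^ 2)) * chi ρ v)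
      (nhdsWithin 0 (Ioi 0))
      (nhds (Real.sign (ρ - rbar) * (f ρ - f rbar) - Real.sign rbar * (f rbar - f 0))) := by
  have hf' : Continuous (deriv f) := hf.continuous_deriv le_rfl
  have hlimit : Real.sign (ρ - rbar) * (f ρ - f rbar) - Real.sign rbar * (f rbar - f 0) =
      ∫ v in 0..ρ, deriv f v * Real.sign (v - rbar) := by
    rw [integral_deriv_mul_sign_sub (hf.differentiable one_ne_zero) (hf'.intervalIntegrable 0 ρ),
      zero_sub, Real.sign_neg]
    ring
  simp only [integral_mul_chi, hlimit]
  exact (tendsto_intervalIntegral_mul_div_sqrt hf' 0 ρ rbar).mono_left nhdsWithin_le_nhds
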